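/- If G is a 3-regular, 3-edge-connected graph that contains a triangle (3-cycle) and has no essential 3-edge cut, then G is isomorphic to K_4. -/
import Mathlib


/-- `G` is `k`-edge-connected: removing fewer than `k` edges leaves it
connected. -/
def EdgeConn {V : Type*} (G : SimpleGraph V) (k : ℕ) : Prop :=
  ∀ F : Finset (Sym2 V), F.card < k → (G.deleteEdges ↑F).Connected

lemma third_neighbor {V : Type*} [Fintype V] (G : SimpleGraph V) {x y z : V}
    (h3 : (G.neighborSet x).ncard = 3) (hy : G.Adj x y) (hz : G.Adj x z) (hyz : y ≠ z) :
    ∃ w, G.Adj x w ∧ w ≠ y ∧ w ≠ z ∧ G.neighborSet x = {y, z, w} := by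
  have hns : ¬ (G.neighborSet x ⊆ {y, z}) := by
    intro h
    have := Set.ncard_le_ncard h (Set.toFinite _)
    rw [h3, Set.ncard_pair hyz] at this
    omega
  obtain ⟨w, hw, hw2⟩ := Set.not_subset.mp hns
  simp only [Set.mem_insert_iff, Set.mem_singleton_iff, not_or] at hw2
  refine ⟨w, hw, hw2.1, hw2.2, ?_⟩
  have hsub : ({y, z, w} : Set V) ⊆ G.neighborSet x := by
    intro u hu
    rcases hu with rfl | rfl | rfl
    · exact hy
    · exact hz
    · exact hw
  have hcard : ({y, z, w} : Set V).ncard = 3 := by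
    rw [Set.ncard_insert_of_notMem (by simp [hyz, Ne.symm hw2.1]) (Set.toFinite _),
      Set.ncard_pair (Ne.symm hw2.2)]
  exact (Set.eq_of_subset_of_ncard_le hsub (by rw [h3, hcard]) (Set.toFinite _)).symm

/-- A cubic 3-edge-connected graph with a triangle and no essential 3-edge cut
is `K₄`. -/
theorem triangle_implies_K4 {V : Type*} [Fintype V] [DecidableEq V]
    (G : SimpleGraph V)
    (hcubic : ∀ v : V, (G.neighborSet v).ncard = 3)
    (hconn : EdgeConn G 3)
    (htriangle : ∃ a b c : V, a ≠ b ∧ b ≠ c ∧ a ≠ c ∧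
      G.Adj a b ∧ G.Adj b c ∧ G.Adj a c)
    (hnoEssential : ¬ ∃ S : Set V,
      (∃ e ∈ G.edgeSet, ∀ v ∈ e, v ∈ S) ∧
      (∃ e ∈ G.edgeSet, ∀ v ∈ e, v ∉ S) ∧
      {e ∈ G.edgeSet | ∃ a ∈ S, ∃ b ∉ S, e = s(a, b)}.ncard = 3) :
    Nonempty (G ≃g (⊤ : SimpleGraph (Fin 4))) := by
  obtain ⟨a, b, c, hab, hbc, hac, Hab, Hbc, Hac⟩ := htriangle
  set S : Set V := {a, b, c} with hS
  obtain ⟨a', Ha', ha'b, ha'c, hNa⟩ := third_neighbor G (hcubic a) Hab Hac hbc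
  obtain ⟨b', Hb', hb'a, hb'c, hNb⟩ := third_neighbor G (hcubic b) Hab.symm Hbc hac
  obtain ⟨c', Hc', hc'a, hc'b, hNc⟩ := third_neighbor G (hcubic c) Hac.symm Hbc.symm hab
  have ha'S : a' ∉ S := by
    simp only [hS, Set.mem_insert_iff, Set.mem_singleton_iff, not_or]
    exact ⟨(G.ne_of_adj Ha').symm, ha'b, ha'c⟩
  have hb'S : b' ∉ S := by
    simp only [hS, Set.mem_insert_iff, Set.mem_singleton_iff, not_or]
    exact ⟨hb'a, (G.ne_of_adj Hb').symm, hb'c⟩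
  have hc'S : c' ∉ S := by
    simp only [hS, Set.mem_insert_iff, Set.mem_singleton_iff, not_or]
    exact ⟨hc'a, hc'b, (G.ne_of_adj Hc').symm⟩
  -- the cut around S has exactly 3 edges
  have hcut : {e ∈ G.edgeSet | ∃ x ∈ S, ∃ y ∉ S, e = s(x, y)} =
      {s(a, a'), s(b, b'), s(c, c')} := by
    ext e
    constructor
    · rintro ⟨he, x, hx, y, hy, rfl⟩
      have hadj : G.Adj x y := he
      rcases hx with rfl | rfl | rfl
      · have : y ∈ G.neighborSet x := hadj
        rw [hNa] at this
        rcases this with rfl | rfl | rfl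
        · exact absurd (by simp [hS]) hy
        · exact absurd (by simp [hS]) hy
        · exact Set.mem_insert _ _
      · have : y ∈ G.neighborSet x := hadj
        rw [hNb] at this
        rcases this with rfl | rfl | rfl
        · exact absurd (by simp [hS]) hy
        · exact absurd (by simp [hS]) hy
        · exact Set.mem_insert_of_mem _ (Set.mem_insert _ _)
      · have : y ∈ G.neighborSet x := hadj
        rw [hNc] at this
        rcases this with rfl | rfl | rfl
        · exact absurd (by simp [hS]) hy
        · exact absurd (by simp [hS]) hy
        · exact Set.mem_insert_of_mem _ (Set.mem_insert_of_mem _ rfl)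
    · rintro (rfl | rfl | rfl)
      · exact ⟨Ha', a, by simp [hS], a', ha'S, rfl⟩
      · exact ⟨Hb', b, by simp [hS], b', hb'S, rfl⟩
      · exact ⟨Hc', c, by simp [hS], c', hc'S, rfl⟩
  have hb'na : b' ≠ a := hb'a
  have hcutcard : {e ∈ G.edgeSet | ∃ x ∈ S, ∃ y ∉ S, e = s(x, y)}.ncard = 3 := by
    rw [hcut]
    have h1 : s(a, a') ≠ s(b, b') := by
      rw [ne_eq, Sym2.eq_iff]
      push_neg
      exact ⟨fun h => absurd h hab, fun h _ => absurd h.symm hb'a⟩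
    have h2 : s(a, a') ≠ s(c, c') := by
      rw [ne_eq, Sym2.eq_iff]
      push_neg
      exact ⟨fun h => absurd h hac, fun h _ => absurd h.symm hc'a⟩
    have h3 : s(b, b') ≠ s(c, c') := by
      rw [ne_eq, Sym2.eq_iff]
      push_neg
      exact ⟨fun h => absurd h hbc, fun h _ => absurd h.symm hc'b⟩
    rw [Set.ncard_insert_of_notMem (by simp [h1, h2]) (Set.toFinite _),
      Set.ncard_pair h3]
  -- every edge meets S
  have hmeet : ∀ e ∈ G.edgeSet, ∃ v ∈ e, v ∈ S := by
    by_contra h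
    push_neg at h
    obtain ⟨e, he, hout⟩ := h
    exact hnoEssential ⟨S, ⟨s(a, b), Hab, by
      intro v hv
      rw [Sym2.mem_iff] at hv
      rcases hv with rfl | rfl
      · exact Set.mem_insert _ _
      · exact Set.mem_insert_of_mem _ (Set.mem_insert _ _)⟩,
      ⟨e, he, hout⟩, hcutcard⟩
  have hScard : S.ncard = 3 := by
    rw [hS, Set.ncard_insert_of_notMem (by simp [hab, hac]) (Set.toFinite _),
      Set.ncard_pair hbc]
  -- all neighbours of a vertex outside S lie in S
  have houtside : ∀ v ∉ S, G.neighborSet v ⊆ S := by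
    intro v hv z hz
    obtain ⟨u, hu, huS⟩ := hmeet s(v, z) hz
    rw [Sym2.mem_iff] at hu
    rcases hu with rfl | rfl
    · exact absurd huS hv
    · exact huS
  have hNa' : G.neighborSet a' = S :=
    Set.eq_of_subset_of_ncard_le (houtside a' ha'S)
      (by rw [hScard, hcubic a']) (Set.toFinite _)
  have Ha'a : G.Adj a' a := by
    have : a ∈ G.neighborSet a' := by rw [hNa']; exact Set.mem_insert _ _
    exact this
  have Ha'b : G.Adj a' b := by
    have : b ∈ G.neighborSet a' := by
      rw [hNa']; exact Set.mem_insert_of_mem _ (Set.mem_insert _ _)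
    exact this
  have Ha'c : G.Adj a' c := by
    have : c ∈ G.neighborSet a' := by
      rw [hNa']; exact Set.mem_insert_of_mem _ (Set.mem_insert_of_mem _ rfl)
    exact this
  have hba' : b' = a' := by
    have : a' ∈ G.neighborSet b := Ha'b.symm
    rw [hNb] at this
    rcases this with rfl | rfl | rfl
    · exact absurd rfl (G.ne_of_adj Ha'a).symm.symm
    · exact absurd rfl ha'c
    · rfl
  have hca' : c' = a' := by
    have : a' ∈ G.neighborSet c := Ha'c.symm
    rw [hNc] at this
    rcases this with rfl | rfl | rfl
    · exact absurd rfl (G.ne_of_adj Ha'a)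
    · exact absurd rfl ha'b
    · rfl
  -- every vertex is one of a, b, c, a'
  have hall : ∀ v : V, v = a ∨ v = b ∨ v = c ∨ v = a' := by
    intro v
    by_cases hv : v ∈ S
    · rcases hv with rfl | rfl | rfl
      · exact Or.inl rfl
      · exact Or.inr (Or.inl rfl)
      · exact Or.inr (Or.inr (Or.inl rfl))
    · have hne : (G.neighborSet v).Nonempty := by
        rw [← Set.ncard_pos (Set.toFinite _)] at *
        rw [hcubic v]; omega
      obtain ⟨u, hu⟩ := hne
      have huS : u ∈ S := houtside v hv hu
      have hvu : G.Adj u v := hu.symm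
      rcases huS with rfl | rfl | rfl
      · have : v ∈ G.neighborSet u := hvu
        rw [hNa] at this
        rcases this with rfl | rfl | rfl
        · exact Or.inr (Or.inl rfl)
        · exact Or.inr (Or.inr (Or.inl rfl))
        · exact Or.inr (Or.inr (Or.inr rfl))
      · have : v ∈ G.neighborSet u := hvu
        rw [hNb] at this
        rcases this with rfl | rfl | h
        · exact Or.inl rfl
        · exact Or.inr (Or.inr (Or.inl rfl))
        · exact Or.inr (Or.inr (Or.inr (h.trans hba')))
      · have : v ∈ G.neighborSet u := hvu
        rw [hNc] at this
        rcases this with rfl | rfl | h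
        · exact Or.inl rfl
        · exact Or.inr (Or.inl rfl)
        · exact Or.inr (Or.inr (Or.inr (h.trans hca')))
  have ha'a : a' ≠ a := (G.ne_of_adj Ha'a)
  -- G is the complete graph
  have hGtop : G = ⊤ := by
    ext u v
    simp only [SimpleGraph.top_adj]
    constructor
    · exact G.ne_of_adj
    · intro huv
      rcases hall u with rfl | rfl | rfl | rfl <;>
        rcases hall v with rfl | rfl | rfl | rfl <;>
        first
          | exact absurd rfl huv
          | assumption
          | exact Hab.symm
          | exact Hbc.symm
          | exact Hac.symm
          | exact Ha'a.symm
          | exact Ha'b.symm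
          | exact Ha'c.symm
  have hcard : Fintype.card V = 4 := by
    have huniv : (Finset.univ : Finset V) = {a, b, c, a'} := by
      ext v
      simp only [Finset.mem_univ, Finset.mem_insert, Finset.mem_singleton, true_iff]
      exact hall v
    rw [Fintype.card, huniv]
    rw [Finset.card_insert_of_notMem (by simp [hab, hac, Ne.symm ha'a]),
      Finset.card_insert_of_notMem (by simp [hbc, Ne.symm ha'b]),
      Finset.card_insert_of_notMem (by simp [Ne.symm ha'c]),
      Finset.card_singleton]
  subst hGtop
  exact ⟨SimpleGraph.Iso.completeGraph (Fintype.equivFinOfCardEq hcard)⟩
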